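/- Let G be a group, H ≤ G a subgroup of index 2, t ∈ G \ H, and let f : H → ℝ be a pseudocharacter with defect D = sup_{h₁,h₂∈H} |f(h₁h₂) − f(h₁) − f(h₂)| such that f(t⁻¹ht) = f(h) for all h ∈ H. Define f̄ : G → ℝ by f̄(g) = f(g) if g ∈ H and f̄(g) = f(h) if g = th with h ∈ H. Then f̄ is a quasicharacter on G; more precisely, |f̄(αβ) − f̄(α) − f̄(β)| ≤ 2D + |f(t²)| for all α, β ∈ G. -/
import Mathlib


/-- extending a conjugation-invariant pseudocharacter on an index-2 subgroup
to a quasicharacter on the whole group, with defect at most `2D + |f(t²)|`. -/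
theorem stmt_14 (G : Type) [Group G] (H : Subgroup G) (hH : H.index = 2)
    (t : G) (ht : t ∉ H) (f : G → ℝ) (D : ℝ)
    -- f is a pseudocharacter on H with defect (at most) D
    (hD : ∀ h₁ h₂ : G, h₁ ∈ H → h₂ ∈ H → |f (h₁ * h₂) - f h₁ - f h₂| ≤ D)
    (hhom : ∀ h ∈ H, ∀ n : ℤ, f (h ^ n) = (n : ℝ) * f h)
    -- f is invariant under conjugation by t
    (hconj : ∀ h ∈ H, f (t⁻¹ * h * t) = f h)
    -- f̄ : G → ℝ extends f, with f̄(th) = f(h)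
    (F : G → ℝ)
    (hF1 : ∀ g ∈ H, F g = f g)
    (hF2 : ∀ h ∈ H, F (t * h) = f h) :
    -- F is a quasicharacter, with defect at most 2D + |f(t²)|
    ∀ α β : G, |F (α * β) - F α - F β| ≤ 2 * D + |f (t ^ 2)| := by

  have hf1 : f 1 = 0 := by simpa using hhom 1 H.one_mem 0
  have hD0 : 0 ≤ D := by
    have := hD 1 1 H.one_mem H.one_mem
    rw [one_mul, hf1] at this
    simpa using this
  have habs : 0 ≤ |f (t ^ 2)| := abs_nonneg _
  have hmul : ∀ a b : G, a * b ∈ H ↔ (a ∈ H ↔ b ∈ H) :=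
    fun a b => Subgroup.mul_mem_iff_of_index_two hH
  have hti : t⁻¹ ∉ H := fun h => ht (by simpa using H.inv_mem h)
  have ht2 : t * t ∈ H := (hmul t t).2 Iff.rfl
  have ht2' : f (t ^ 2) = f (t * t) := by rw [pow_two]
  intro α β
  by_cases hα : α ∈ H <;> by_cases hβ : β ∈ H
  · rw [hF1 _ (H.mul_mem hα hβ), hF1 _ hα, hF1 _ hβ]
    have := hD α β hα hβ
    linarith
  · -- α ∈ H, β ∉ H
    have hb : t⁻¹ * β ∈ H := (hmul _ _).2 (iff_of_false hti hβ)
    have hab : α * β ∉ H := fun h => hβ (((hmul α β).1 h).1 hα)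
    have h1 : t⁻¹ * α ∉ H := fun h => hti (((hmul _ _).1 h).2 hα)
    have h2 : t⁻¹ * α * t ∈ H := (hmul _ _).2 (iff_of_false h1 ht)
    have hFab : F (α * β) = f ((t⁻¹ * α * t) * (t⁻¹ * β)) := by
      rw [← hF2 _ (H.mul_mem h2 hb)]
      congr 1
      group
    have hFβ : F β = f (t⁻¹ * β) := by
      rw [← hF2 _ hb]
      congr 1
      group
    rw [hFab, hFβ, hF1 _ hα]
    have := hD _ _ h2 hb
    rw [hconj _ hα] at this
    linarith
  · -- α ∉ H, β ∈ H
    have ha : t⁻¹ * α ∈ H := (hmul _ _).2 (iff_of_false hti hα)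
    have hab : α * β ∉ H := fun h => hα (((hmul α β).1 h).2 hβ)
    have hFab : F (α * β) = f ((t⁻¹ * α) * β) := by
      rw [← hF2 _ (H.mul_mem ha hβ)]
      congr 1
      group
    have hFα : F α = f (t⁻¹ * α) := by
      rw [← hF2 _ ha]
      congr 1
      group
    rw [hFab, hFα, hF1 _ hβ]
    have := hD _ _ ha hβ
    linarith
  · -- α ∉ H, β ∉ H
    have ha : t⁻¹ * α ∈ H := (hmul _ _).2 (iff_of_false hti hα)
    have hb : t⁻¹ * β ∈ H := (hmul _ _).2 (iff_of_false hti hβ)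
    have hab : α * β ∈ H := (hmul _ _).2 (iff_of_false hα hβ)
    have hc : t⁻¹ * (t⁻¹ * α) * t ∈ H :=
      (hmul _ _).2 (iff_of_false (fun h => hti (((hmul _ _).1 h).2 ha)) ht)
    have hd : (t * t) * (t⁻¹ * (t⁻¹ * α) * t) ∈ H := H.mul_mem ht2 hc
    have hFα : F α = f (t⁻¹ * α) := by
      rw [← hF2 _ ha]; congr 1; group
    have hFβ : F β = f (t⁻¹ * β) := by
      rw [← hF2 _ hb]; congr 1; group
    have e1 := hD _ _ hd hb
    have e2 := hD _ _ ht2 hc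
    have e3 : f (t⁻¹ * (t⁻¹ * α) * t) = f (t⁻¹ * α) := hconj _ ha
    have e4 : ((t * t) * (t⁻¹ * (t⁻¹ * α) * t)) * (t⁻¹ * β) = α * β := by group
    rw [hF1 _ hab, hFα, hFβ, ← e4]
    rw [e3] at e2
    rw [abs_le] at e1 e2 ⊢
    have h5 : f (t * t) ≤ |f (t ^ 2)| := by rw [ht2']; exact le_abs_self _
    have h6 : -|f (t ^ 2)| ≤ f (t * t) := by rw [ht2']; exact neg_abs_le _
    constructor <;> linarith [e1.1, e1.2, e2.1, e2.2]
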